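/- arXiv:2512.24694 — 4 statements merged into one kernel-verified Lean document; each statement's English description precedes it below -/
import Mathlib

section
/- Let f_1,…,f_N : ℝ^d → ℝ be convex and L-smooth (L > 0), let f = (1/N)Σ_i f_i, and let x* be a global minimizer of f with f* = f(x*). Let x_1,…,x_N ∈ ℝ^d with x̄ = (1/N)Σ_i x_i, and let g_1,…,g_N be independent square-integrable ℝ^d-valued random vectors with E[g_i] = ∇f_i(x_i) and E‖g_i − ∇f_i(x_i)‖² ≤ σ_i². For a step size η ≥ 0 set x̄⁺ = x̄ − (η/N)Σ_i g_i. Then E‖x̄⁺ − x*‖² ≤ ‖x̄ − x*‖² + (η²/N)·σ̄² + 2η(2Lη − 1)(f(x̄) − f*) + (Lη/N)(2Lη + 1)·Σ_i ‖x̄ − x_i‖², where σ̄² = (1/N)Σ_i σ_i². -/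
/-!
The noise `gᵢ - ∇fᵢ(xᵢ)` is independent and centred, so in expectation it adds exactly
`(η/N)² Σ E‖gᵢ - ∇fᵢ(xᵢ)‖²` to the squared distance reached by the deterministic step `x̄ - η v`,
`v = (1/N) Σ ∇fᵢ(xᵢ)`. Expanding that square, the descent lemma at `xᵢ` combined with convexity
gives `⟪v, x̄ - x*⟫ ≥ f(x̄) - f* - (L/2N) Σ ‖x̄ - xᵢ‖²`, while `‖v‖² ≤ 2‖v - ∇f(x̄)‖² + 2‖∇f(x̄)‖²`,
the first term being controlled by smoothness and the second by `2L (f(x̄) - f*)`, which is the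
descent lemma for `f` along the step `x̄ - ∇f(x̄)/L`.
-/

open MeasureTheory ProbabilityTheory
open scoped RealInnerProductSpace

section Gradient

variable {E : Type*} [NormedAddCommGroup E] [InnerProductSpace ℝ E] [CompleteSpace E]
  {f : E → ℝ} {f' : E → E}

theorem HasGradientAt.hasDerivAt_comp_add_smul {x v : E} {t : ℝ} {g : E}
    (hf : HasGradientAt f g (x + t • v)) :
    HasDerivAt (fun s : ℝ => f (x + s • v)) ⟪g, v⟫ t := by
  have hline : HasDerivAt (fun s : ℝ => x + s • v) v t := by
    simpa using ((hasDerivAt_id t).smul_const v).const_add x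
  simpa [Function.comp_def] using hf.hasFDerivAt.comp_hasDerivAt t hline

theorem ConvexOn.add_inner_sub_le_of_hasGradientAt (hconv : ConvexOn ℝ Set.univ f) {x : E}
    {g : E} (hf : HasGradientAt f g x) (y : E) :
    f x + ⟪g, y - x⟫ ≤ f y := by
  have hline : ConvexOn ℝ Set.univ (fun t : ℝ => f (x + t • (y - x))) := by
    simpa [Function.comp_def, AffineMap.lineMap_apply, add_comm] using
      hconv.comp_affineMap (AffineMap.lineMap x y : ℝ →ᵃ[ℝ] E)
  have hslope := hline.le_slope_of_hasDerivAt (Set.mem_univ 0) (Set.mem_univ 1) one_pos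
    (HasGradientAt.hasDerivAt_comp_add_smul (by simpa using hf))
  simp only [slope_def_field, one_smul, add_sub_cancel, zero_smul, add_zero, sub_zero,
    div_one] at hslope
  linarith

theorem le_add_inner_sub_add_sq_of_lipschitz_gradient (hf : ∀ u, HasGradientAt f (f' u) u)
    {L : ℝ} (hL : ∀ u v, ‖f' u - f' v‖ ≤ L * ‖u - v‖) (x y : E) :
    f y ≤ f x + ⟪f' x, y - x⟫ + L / 2 * ‖y - x‖ ^ 2 := by
  set v := y - x
  have hderiv (t : ℝ) : HasDerivAt (fun s : ℝ => f (x + s • v)) ⟪f' (x + t • v), v⟫ t :=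
    (hf _).hasDerivAt_comp_add_smul
  have hmodel (t : ℝ) : HasDerivAt (fun s : ℝ => f x + s * ⟪f' x, v⟫ + L / 2 * s ^ 2 * ‖v‖ ^ 2)
      (⟪f' x, v⟫ + L * t * ‖v‖ ^ 2) t := by
    refine ((((hasDerivAt_id t).mul_const ⟪f' x, v⟫).const_add (f x)).add
      (((hasDerivAt_pow 2 t).const_mul (L / 2)).mul_const (‖v‖ ^ 2))).congr_deriv ?_
    simp only [Nat.cast_ofNat]
    ring
  have hslope {t : ℝ} (ht : 0 ≤ t) : ⟪f' (x + t • v) - f' x, v⟫ ≤ L * t * ‖v‖ ^ 2 :=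
    calc _ ≤ ‖f' (x + t • v) - f' x‖ * ‖v‖ := real_inner_le_norm _ _
      _ ≤ L * ‖t • v‖ * ‖v‖ := by gcongr; simpa using hL (x + t • v) x
      _ = L * t * ‖v‖ ^ 2 := by rw [norm_smul, Real.norm_of_nonneg ht]; ring
  have hcompare := image_le_of_deriv_right_le_deriv_boundary (a := 0) (b := 1)
    (fun t _ => (hderiv t).continuousAt.continuousWithinAt)
    (fun t _ => (hderiv t).hasDerivWithinAt) (by simp)
    (fun t _ => (hmodel t).continuousAt.continuousWithinAt)
    (fun t _ => (hmodel t).hasDerivWithinAt)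
    (fun t ht => by linarith [inner_sub_left (𝕜 := ℝ) (f' (x + t • v)) (f' x) v, hslope ht.1])
    (Set.right_mem_Icc.2 zero_le_one)
  simpa [v] using hcompare

end Gradient

section QuadraticBound

variable {E : Type*} [NormedAddCommGroup E] [InnerProductSpace ℝ E]

theorem sq_norm_le_of_le_add_inner_sub_add_sq {F : E → ℝ} {x xstar w : E} {L : ℝ} (hL : 0 < L)
    (hupper : ∀ y, F y ≤ F x + ⟪w, y - x⟫ + L / 2 * ‖y - x‖ ^ 2) (hmin : ∀ y, F xstar ≤ F y) :
    ‖w‖ ^ 2 ≤ 2 * L * (F x - F xstar) := by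
  have hstep := (hmin _).trans (hupper (x - L⁻¹ • w))
  rw [sub_sub_cancel_left, inner_neg_right, real_inner_smul_right, real_inner_self_eq_norm_sq,
    norm_neg, norm_smul, Real.norm_of_nonneg (inv_nonneg.2 hL.le)] at hstep
  have hquad : L⁻¹ * ‖w‖ ^ 2 - L / 2 * (L⁻¹ * ‖w‖) ^ 2 = ‖w‖ ^ 2 / (2 * L) := by
    field_simp; ring
  have hgap : ‖w‖ ^ 2 / (2 * L) ≤ F x - F xstar := by linarith
  rwa [div_le_iff₀ (by positivity), mul_comm] at hgap

theorem sq_norm_average_le {ι : Type*} [Fintype ι] (a : ι → E) :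
    ‖(Fintype.card ι : ℝ)⁻¹ • ∑ i, a i‖ ^ 2 ≤ (Fintype.card ι : ℝ)⁻¹ * ∑ i, ‖a i‖ ^ 2 := by
  set n : ℝ := (Fintype.card ι : ℝ)
  have hsum : (∑ i, ‖a i‖) ^ 2 ≤ n * ∑ i, ‖a i‖ ^ 2 := by
    simpa using sq_sum_le_card_mul_sum_sq (s := Finset.univ) (f := fun i => ‖a i‖)
  calc ‖n⁻¹ • ∑ i, a i‖ ^ 2 ≤ (n⁻¹ * ∑ i, ‖a i‖) ^ 2 := by
        rw [norm_smul, Real.norm_of_nonneg (by positivity)]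
        gcongr
        exact norm_sum_le _ _
    _ = n⁻¹ ^ 2 * (∑ i, ‖a i‖) ^ 2 := by ring
    _ ≤ n⁻¹ ^ 2 * (n * ∑ i, ‖a i‖ ^ 2) := by gcongr
    _ = n⁻¹ * ∑ i, ‖a i‖ ^ 2 := by
        rcases eq_or_ne n 0 with hn | hn
        · simp [hn]
        · field_simp

end QuadraticBound

section AveragedStep

variable {E : Type*} [NormedAddCommGroup E] [InnerProductSpace ℝ E] [CompleteSpace E]
  {ι : Type*} [Fintype ι] {f : ι → E → ℝ} {f' : ι → E → E} {L : ℝ}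

theorem average_le_add_inner_sub_add_sq (hf : ∀ i u, HasGradientAt (f i) (f' i u) u)
    (hL : 0 ≤ L) (hsmooth : ∀ i u v, ‖f' i u - f' i v‖ ≤ L * ‖u - v‖) (z y : E) :
    (Fintype.card ι : ℝ)⁻¹ * ∑ i, f i y
      ≤ (Fintype.card ι : ℝ)⁻¹ * ∑ i, f i z + ⟪(Fintype.card ι : ℝ)⁻¹ • ∑ i, f' i z, y - z⟫
        + L / 2 * ‖y - z‖ ^ 2 := by
  set n : ℝ := (Fintype.card ι : ℝ)
  have hsum := Finset.sum_le_sum fun i (_ : i ∈ Finset.univ) =>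
    le_add_inner_sub_add_sq_of_lipschitz_gradient (hf i) (hsmooth i) z y
  have hn : n⁻¹ * n ≤ 1 := by
    rcases eq_or_ne n 0 with h | h <;> simp [h]
  rw [Finset.sum_add_distrib, Finset.sum_add_distrib, Finset.sum_const, Finset.card_univ,
    nsmul_eq_mul] at hsum
  rw [real_inner_smul_left, sum_inner]
  linarith [mul_le_mul_of_nonneg_left hsum (inv_nonneg.2 (Nat.cast_nonneg (Fintype.card ι))),
    mul_le_mul_of_nonneg_right hn (by positivity : 0 ≤ L / 2 * ‖y - z‖ ^ 2)]

theorem average_sub_sub_le_inner_average_gradient (hf : ∀ i u, HasGradientAt (f i) (f' i u) u)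
    (hsmooth : ∀ i u v, ‖f' i u - f' i v‖ ≤ L * ‖u - v‖) (hconv : ∀ i, ConvexOn ℝ Set.univ (f i))
    (x : ι → E) (z xstar : E) :
    ((Fintype.card ι : ℝ)⁻¹ * ∑ i, f i z - (Fintype.card ι : ℝ)⁻¹ * ∑ i, f i xstar)
        - L / 2 * ((Fintype.card ι : ℝ)⁻¹ * ∑ i, ‖z - x i‖ ^ 2)
      ≤ ⟪(Fintype.card ι : ℝ)⁻¹ • ∑ i, f' i (x i), z - xstar⟫ := by
  have hterm (i : ι) : f i z - f i xstar - L / 2 * ‖z - x i‖ ^ 2 ≤ ⟪f' i (x i), z - xstar⟫ := by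
    have hupper := le_add_inner_sub_add_sq_of_lipschitz_gradient (hf i) (hsmooth i) (x i) z
    have hlower := (hconv i).add_inner_sub_le_of_hasGradientAt (hf i (x i)) xstar
    have hsplit : z - xstar = (z - x i) - (xstar - x i) := by abel
    rw [hsplit, inner_sub_right]
    linarith
  have hsum := mul_le_mul_of_nonneg_left (Finset.sum_le_sum fun i (_ : i ∈ Finset.univ) => hterm i)
    (inv_nonneg.2 (Nat.cast_nonneg (Fintype.card ι)))
  rw [real_inner_smul_left, sum_inner]
  simp only [Finset.sum_sub_distrib, ← Finset.mul_sum] at hsum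
  linarith

theorem sq_norm_average_gradient_le (hf : ∀ i u, HasGradientAt (f i) (f' i u) u) (hL : 0 < L)
    (hsmooth : ∀ i u v, ‖f' i u - f' i v‖ ≤ L * ‖u - v‖) {xstar : E}
    (hmin : ∀ y, (Fintype.card ι : ℝ)⁻¹ * ∑ i, f i xstar ≤ (Fintype.card ι : ℝ)⁻¹ * ∑ i, f i y)
    (x : ι → E) (z : E) :
    ‖(Fintype.card ι : ℝ)⁻¹ • ∑ i, f' i (x i)‖ ^ 2
      ≤ 2 * L ^ 2 * ((Fintype.card ι : ℝ)⁻¹ * ∑ i, ‖z - x i‖ ^ 2)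
        + 4 * L * ((Fintype.card ι : ℝ)⁻¹ * ∑ i, f i z
          - (Fintype.card ι : ℝ)⁻¹ * ∑ i, f i xstar) := by
  set n : ℝ := (Fintype.card ι : ℝ)
  set v := n⁻¹ • ∑ i, f' i (x i)
  set w := n⁻¹ • ∑ i, f' i z
  have hw : ‖w‖ ^ 2 ≤ 2 * L * (n⁻¹ * ∑ i, f i z - n⁻¹ * ∑ i, f i xstar) :=
    sq_norm_le_of_le_add_inner_sub_add_sq (F := fun y => n⁻¹ * ∑ i, f i y) hL
      (average_le_add_inner_sub_add_sq hf hL.le hsmooth z) hmin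
  have hvw : ‖v - w‖ ^ 2 ≤ L ^ 2 * (n⁻¹ * ∑ i, ‖z - x i‖ ^ 2) :=
    calc ‖v - w‖ ^ 2 = ‖n⁻¹ • ∑ i, (f' i (x i) - f' i z)‖ ^ 2 := by
          rw [Finset.sum_sub_distrib, smul_sub]
      _ ≤ n⁻¹ * ∑ i, ‖f' i (x i) - f' i z‖ ^ 2 := sq_norm_average_le _
      _ ≤ n⁻¹ * ∑ i, L ^ 2 * ‖z - x i‖ ^ 2 := by
          gcongr with i
          rw [norm_sub_rev z, ← mul_pow]
          exact pow_le_pow_left₀ (norm_nonneg _) (hsmooth i _ _) 2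
      _ = L ^ 2 * (n⁻¹ * ∑ i, ‖z - x i‖ ^ 2) := by rw [← Finset.mul_sum]; ring
  have hsplit : ‖v‖ ^ 2 ≤ 2 * (‖v - w‖ ^ 2 + ‖w‖ ^ 2) :=
    calc ‖v‖ ^ 2 = ‖(v - w) + w‖ ^ 2 := by rw [sub_add_cancel]
      _ ≤ (‖v - w‖ + ‖w‖) ^ 2 := by gcongr; exact norm_add_le _ _
      _ ≤ 2 * (‖v - w‖ ^ 2 + ‖w‖ ^ 2) := add_sq_le
  linarith

theorem sq_norm_sub_average_gradient_step_le (hf : ∀ i u, HasGradientAt (f i) (f' i u) u)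
    (hL : 0 < L) (hsmooth : ∀ i u v, ‖f' i u - f' i v‖ ≤ L * ‖u - v‖)
    (hconv : ∀ i, ConvexOn ℝ Set.univ (f i)) {xstar : E}
    (hmin : ∀ y, (Fintype.card ι : ℝ)⁻¹ * ∑ i, f i xstar ≤ (Fintype.card ι : ℝ)⁻¹ * ∑ i, f i y)
    (x : ι → E) (z : E) {η : ℝ} (hη : 0 ≤ η) :
    ‖z - (η / Fintype.card ι) • ∑ i, f' i (x i) - xstar‖ ^ 2
      ≤ ‖z - xstar‖ ^ 2
        + 2 * η * (2 * L * η - 1)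
          * ((Fintype.card ι : ℝ)⁻¹ * ∑ i, f i z - (Fintype.card ι : ℝ)⁻¹ * ∑ i, f i xstar)
        + (L * η / Fintype.card ι) * (2 * L * η + 1) * ∑ i, ‖z - x i‖ ^ 2 := by
  have hcross := average_sub_sub_le_inner_average_gradient hf hsmooth hconv x z xstar
  have hgrad := sq_norm_average_gradient_le hf hL hsmooth hmin x z
  set n : ℝ := (Fintype.card ι : ℝ)
  set v := n⁻¹ • ∑ i, f' i (x i)
  have hexpand : ‖z - (η / n) • ∑ i, f' i (x i) - xstar‖ ^ 2
      = ‖z - xstar‖ ^ 2 - 2 * η * ⟪v, z - xstar⟫ + η ^ 2 * ‖v‖ ^ 2 := by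
    rw [div_eq_mul_inv, mul_smul, sub_right_comm, norm_sub_sq_real, real_inner_smul_right,
      norm_smul, Real.norm_eq_abs, mul_pow, sq_abs, real_inner_comm]
    ring
  rw [hexpand, div_eq_mul_inv]
  linarith [mul_le_mul_of_nonneg_left hcross (by positivity : 0 ≤ 2 * η),
    mul_le_mul_of_nonneg_left hgrad (sq_nonneg η)]

end AveragedStep

section Stochastic

variable {Ω : Type*} [MeasurableSpace Ω] {μ : Measure Ω}
  {E : Type*} [NormedAddCommGroup E] [InnerProductSpace ℝ E]

theorem MeasureTheory.MemLp.integrable_inner {X Y : Ω → E} (hX : MemLp X 2 μ) (hY : MemLp Y 2 μ) :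
    Integrable (fun ω => ⟪X ω, Y ω⟫) μ := by
  refine (L2.integrable_inner (𝕜 := ℝ) (hX.toLp X) (hY.toLp Y)).congr ?_
  filter_upwards [hX.coeFn_toLp, hY.coeFn_toLp] with ω hXω hYω
  rw [hXω, hYω]

variable [CompleteSpace E] [IsProbabilityMeasure μ]

theorem integral_sq_norm_sub_of_integral_eq_zero {Y : Ω → E}
    (hY : MemLp Y 2 μ) (hmean : ∫ ω, Y ω ∂μ = 0) (a : E) :
    ∫ ω, ‖a - Y ω‖ ^ 2 ∂μ = ‖a‖ ^ 2 + ∫ ω, ‖Y ω‖ ^ 2 ∂μ := by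
  have hcross : Integrable (fun ω => 2 * ⟪a, Y ω⟫) μ :=
    ((hY.integrable one_le_two).const_inner a).const_mul 2
  have hfirst : Integrable (fun ω => ‖a‖ ^ 2 - 2 * ⟪a, Y ω⟫) μ := (integrable_const _).sub hcross
  simp_rw [norm_sub_sq_real]
  rw [integral_add hfirst (hY.integrable_norm_pow two_ne_zero),
    integral_sub (integrable_const _) hcross, integral_const_mul,
    integral_inner (hY.integrable one_le_two), hmean]
  simp

variable [MeasurableSpace E] [BorelSpace E]

theorem integral_sq_norm_sum_of_iIndepFun {ι : Type*} [Fintype ι] {X : ι → Ω → E}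
    (hindep : iIndepFun X μ) (hL2 : ∀ i, MemLp (X i) 2 μ) (hmean : ∀ i, ∫ ω, X i ω ∂μ = 0) :
    ∫ ω, ‖∑ i, X i ω‖ ^ 2 ∂μ = ∑ i, ∫ ω, ‖X i ω‖ ^ 2 ∂μ := by
  have horth (i j : ι) (hij : i ≠ j) : ∫ ω, ⟪X i ω, X j ω⟫ ∂μ = 0 := by
    have := (hindep.indepFun hij).integral_bilin ((hL2 i).integrable one_le_two)
      ((hL2 j).integrable one_le_two) (innerSL ℝ : E →L[ℝ] E →L[ℝ] ℝ)
    simp only [hmean, map_zero] at this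
    exact this
  calc ∫ ω, ‖∑ i, X i ω‖ ^ 2 ∂μ = ∫ ω, ∑ i, ∑ j, ⟪X i ω, X j ω⟫ ∂μ := by
        simp_rw [← real_inner_self_eq_norm_sq, sum_inner, inner_sum]
    _ = ∑ i, ∑ j, ∫ ω, ⟪X i ω, X j ω⟫ ∂μ := by
        rw [integral_finsetSum _ fun i _ => integrable_finsetSum _
          fun j _ => (hL2 i).integrable_inner (hL2 j)]
        simp_rw [integral_finsetSum _ fun j _ => (hL2 _).integrable_inner (hL2 j)]
    _ = ∑ i, ∫ ω, ‖X i ω‖ ^ 2 ∂μ := by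
        refine Finset.sum_congr rfl fun i _ => ?_
        rw [Finset.sum_eq_single i (fun j _ hji => horth i j hji.symm) (by simp)]
        simp_rw [real_inner_self_eq_norm_sq]

theorem integral_sq_norm_sub_smul_sum_sub_le {ι : Type*} [Fintype ι]
    {g : ι → Ω → E} (hindep : iIndepFun g μ) (hL2 : ∀ i, MemLp (g i) 2 μ) {m : ι → E}
    (hmean : ∀ i, ∫ ω, g i ω ∂μ = m i) {σ : ι → ℝ}
    (hvar : ∀ i, ∫ ω, ‖g i ω - m i‖ ^ 2 ∂μ ≤ σ i ^ 2) (a : E) (c : ℝ) :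
    ∫ ω, ‖a - c • ∑ i, (g i ω - m i)‖ ^ 2 ∂μ ≤ ‖a‖ ^ 2 + c ^ 2 * ∑ i, σ i ^ 2 := by
  set X : ι → Ω → E := fun i ω => c • (g i ω - m i)
  have hXL2 (i : ι) : MemLp (X i) 2 μ := ((hL2 i).sub (memLp_const _)).const_smul c
  have hXmean (i : ι) : ∫ ω, X i ω ∂μ = 0 := by
    simp [X, integral_smul, integral_sub ((hL2 i).integrable one_le_two) (integrable_const _),
      hmean]
  have hXindep : iIndepFun X μ :=
    hindep.comp (fun i v => c • (v - m i)) fun i => by fun_prop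
  have hXsq (i : ι) : ∫ ω, ‖X i ω‖ ^ 2 ∂μ = c ^ 2 * ∫ ω, ‖g i ω - m i‖ ^ 2 ∂μ := by
    simp [X, norm_smul, mul_pow, integral_const_mul]
  calc ∫ ω, ‖a - c • ∑ i, (g i ω - m i)‖ ^ 2 ∂μ = ∫ ω, ‖a - ∑ i, X i ω‖ ^ 2 ∂μ := by
        simp only [X, Finset.smul_sum]
    _ = ‖a‖ ^ 2 + ∑ i, c ^ 2 * ∫ ω, ‖g i ω - m i‖ ^ 2 ∂μ := by
        have hsumL2 : MemLp (fun ω => ∑ i, X i ω) 2 μ := memLp_finsetSum _ fun i _ => hXL2 i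
        have hsummean : ∫ ω, ∑ i, X i ω ∂μ = 0 := by
          simp [integral_finsetSum _ fun i _ => (hXL2 i).integrable one_le_two, hXmean]
        rw [integral_sq_norm_sub_of_integral_eq_zero hsumL2 hsummean,
          integral_sq_norm_sum_of_iIndepFun hXindep hXL2 hXmean]
        simp_rw [hXsq]
    _ ≤ ‖a‖ ^ 2 + c ^ 2 * ∑ i, σ i ^ 2 := by
        rw [← Finset.mul_sum]
        gcongr with i
        exact hvar i

end Stochastic

theorem stmt3_general {d N : ℕ}
    (f : Fin N → EuclideanSpace ℝ (Fin d) → ℝ)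
    (gradf : Fin N → EuclideanSpace ℝ (Fin d) → EuclideanSpace ℝ (Fin d))
    (hgrad : ∀ i x, HasGradientAt (f i) (gradf i x) x)
    (L : ℝ) (hL : 0 < L)
    (hsmooth : ∀ i x y, ‖gradf i x - gradf i y‖ ≤ L * ‖x - y‖)
    (hconv : ∀ i, ConvexOn ℝ Set.univ (f i))
    (xstar : EuclideanSpace ℝ (Fin d))
    (hstar : ∀ y, (N : ℝ)⁻¹ * ∑ i, f i xstar ≤ (N : ℝ)⁻¹ * ∑ i, f i y)
    (x : Fin N → EuclideanSpace ℝ (Fin d))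
    {Ω : Type*} [MeasurableSpace Ω] (μ : Measure Ω) [IsProbabilityMeasure μ]
    (g : Fin N → Ω → EuclideanSpace ℝ (Fin d))
    (hindep : iIndepFun g μ)
    (hL2 : ∀ i, MemLp (g i) 2 μ)
    (hmean : ∀ i, ∫ ω, g i ω ∂μ = gradf i (x i))
    (σ : Fin N → ℝ)
    (hvar : ∀ i, ∫ ω, ‖g i ω - gradf i (x i)‖ ^ 2 ∂μ ≤ (σ i) ^ 2)
    (η : ℝ) (hη : 0 ≤ η) :
    (∫ ω, ‖((N : ℝ)⁻¹ • ∑ i, x i - (η / N) • ∑ i, g i ω) - xstar‖ ^ 2 ∂μ)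
      ≤ ‖(N : ℝ)⁻¹ • (∑ i, x i) - xstar‖ ^ 2
        + η ^ 2 / N * ((N : ℝ)⁻¹ * ∑ i, (σ i) ^ 2)
        + 2 * η * (2 * L * η - 1)
            * ((N : ℝ)⁻¹ * ∑ i, f i ((N : ℝ)⁻¹ • ∑ j, x j) - (N : ℝ)⁻¹ * ∑ i, f i xstar)
        + (L * η / N) * (2 * L * η + 1) * ∑ i, ‖(N : ℝ)⁻¹ • (∑ j, x j) - x i‖ ^ 2 := by
  set xbar := (N : ℝ)⁻¹ • ∑ i, x i
  have hstep := sq_norm_sub_average_gradient_step_le hgrad hL hsmooth hconv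
    (by simpa using hstar) x xbar hη
  have hnoise := integral_sq_norm_sub_smul_sum_sub_le hindep hL2 hmean hvar
    (xbar - (η / N) • ∑ i, gradf i (x i) - xstar) (η / N)
  simp only [Fintype.card_fin] at hstep
  have hsplit (ω : Ω) : xbar - (η / N) • ∑ i, g i ω - xstar
      = xbar - (η / N) • ∑ i, gradf i (x i) - xstar - (η / N) • ∑ i, (g i ω - gradf i (x i)) := by
    rw [Finset.sum_sub_distrib, smul_sub]
    abel
  have hvariance : (η / N) ^ 2 * ∑ i, σ i ^ 2 = η ^ 2 / N * ((N : ℝ)⁻¹ * ∑ i, σ i ^ 2) := by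
    ring
  simp_rw [hsplit]
  linarith

/-- descent lemma: for convex `L`-smooth `f_i` with gradients `∇f_i`,
a global minimizer `x*` of `f = (1/N) Σ f_i`, points `x_i` with average `x̄`, and independent
square-integrable random vectors `g_i` with mean `∇f_i(x_i)` and variance at most `σ_i²`,
the averaged SGD step `x̄⁺ = x̄ − (η/N) Σ g_i` satisfies
`E‖x̄⁺ − x*‖² ≤ ‖x̄ − x*‖² + (η²/N) σ̄² + 2η(2Lη − 1)(f(x̄) − f*)
  + (Lη/N)(2Lη + 1) Σ ‖x̄ − x_i‖²`. -/
theorem stmt3 {d N : ℕ} (hN : 1 ≤ N)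
    (f : Fin N → EuclideanSpace ℝ (Fin d) → ℝ)
    (gradf : Fin N → EuclideanSpace ℝ (Fin d) → EuclideanSpace ℝ (Fin d))
    (hgrad : ∀ i x, HasGradientAt (f i) (gradf i x) x)
    (L : ℝ) (hL : 0 < L)
    (hsmooth : ∀ i x y, ‖gradf i x - gradf i y‖ ≤ L * ‖x - y‖)
    (hconv : ∀ i, ConvexOn ℝ Set.univ (f i))
    (xstar : EuclideanSpace ℝ (Fin d))
    (hstar : ∀ y, (N : ℝ)⁻¹ * ∑ i, f i xstar ≤ (N : ℝ)⁻¹ * ∑ i, f i y)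
    (x : Fin N → EuclideanSpace ℝ (Fin d))
    {Ω : Type*} [MeasurableSpace Ω] (μ : Measure Ω) [IsProbabilityMeasure μ]
    (g : Fin N → Ω → EuclideanSpace ℝ (Fin d))
    (hgmeas : ∀ i, Measurable (g i))
    (hindep : iIndepFun g μ)
    (hL2 : ∀ i, MemLp (g i) 2 μ)
    (hmean : ∀ i, ∫ ω, g i ω ∂μ = gradf i (x i))
    (σ : Fin N → ℝ)
    (hvar : ∀ i, ∫ ω, ‖g i ω - gradf i (x i)‖ ^ 2 ∂μ ≤ (σ i) ^ 2)
    (η : ℝ) (hη : 0 ≤ η) :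
    (∫ ω, ‖((N : ℝ)⁻¹ • ∑ i, x i - (η / N) • ∑ i, g i ω) - xstar‖ ^ 2 ∂μ)
      ≤ ‖(N : ℝ)⁻¹ • (∑ i, x i) - xstar‖ ^ 2
        + η ^ 2 / N * ((N : ℝ)⁻¹ * ∑ i, (σ i) ^ 2)
        + 2 * η * (2 * L * η - 1)
            * ((N : ℝ)⁻¹ * ∑ i, f i ((N : ℝ)⁻¹ • ∑ j, x j) - (N : ℝ)⁻¹ * ∑ i, f i xstar)
        + (L * η / N) * (2 * L * η + 1) * ∑ i, ‖(N : ℝ)⁻¹ • (∑ j, x j) - x i‖ ^ 2 :=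
  stmt3_general f gradf hgrad L hL hsmooth hconv xstar hstar x μ g hindep hL2 hmean σ hvar η hη
end

section
/- Let f_1,…,f_N : ℝ^d → ℝ be convex and L-smooth (L > 0), let f = (1/N)Σ_i f_i, let x* ∈ ℝ^d be any point, and let η ≥ 0. Then for any points x_1,…,x_N ∈ ℝ^d with x̄ = (1/N)Σ_i x_i, one has −(2η/N)·Σ_i ⟨x̄ − x*, ∇f_i(x_i)⟩ ≤ −2η·(f(x̄) − f(x*)) + (Lη/N)·Σ_i ‖x̄ − x_i‖². -/
/-!
Convexity at `x i` gives `f_i(x*) ≥ f_i(x_i) + ⟨∇f_i(x_i), x* - x_i⟩`, and the descent lemma for the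
`L`-Lipschitz gradient gives `f_i(x̄) ≤ f_i(x_i) + ⟨∇f_i(x_i), x̄ - x_i⟩ + (L/2)‖x̄ - x_i‖²`.
Subtracting, `f_i(x̄) - f_i(x*) ≤ ⟨x̄ - x*, ∇f_i(x_i)⟩ + (L/2)‖x̄ - x_i‖²`; averaging over `i` and
scaling by `2η ≥ 0` is the claim.
-/

open scoped RealInnerProductSpace

open AffineMap Set

section

variable {E : Type*} [NormedAddCommGroup E] [InnerProductSpace ℝ E] [CompleteSpace E]
  {g : E → ℝ} {g' u v : E}

theorem HasGradientAt.hasDerivAt_comp_lineMap {t : ℝ} (hg : HasGradientAt g g' (lineMap u v t)) :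
    HasDerivAt (g ∘ lineMap u v) ⟪g', v - u⟫ t := by
  simpa using hg.hasFDerivAt.comp_hasDerivAt t hasDerivAt_lineMap

theorem ConvexOn.inner_le_sub_of_hasGradientAt (hc : ConvexOn ℝ univ g) (hg : HasGradientAt g g' u)
    (v : E) : ⟪g', v - u⟫ ≤ g v - g u := by
  have hφ := hc.comp_affineMap (lineMap u v)
  rw [preimage_univ] at hφ
  simpa [slope_def_field] using hφ.le_slope_of_hasDerivAt (mem_univ 0) (mem_univ 1) one_pos
    (HasGradientAt.hasDerivAt_comp_lineMap (by simpa using hg))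

theorem le_add_inner_add_sq_of_lipschitz_gradient {G : E → E} {L : ℝ}
    (hg : ∀ p, HasGradientAt g (G p) p) (hG : ∀ p, ‖G p - G u‖ ≤ L * ‖p - u‖) (v : E) :
    g v ≤ g u + ⟪G u, v - u⟫ + L / 2 * ‖v - u‖ ^ 2 := by
  set ψ : ℝ → ℝ := fun t => (g ∘ lineMap u v) t - t * ⟪G u, v - u⟫ - L / 2 * t ^ 2 * ‖v - u‖ ^ 2
  have hψ : ∀ t, HasDerivAt ψ
      (⟪G (lineMap u v t), v - u⟫ - ⟪G u, v - u⟫ - L * t * ‖v - u‖ ^ 2) t := by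
    intro t
    refine ((((hg _).hasDerivAt_comp_lineMap).sub ((hasDerivAt_id t).mul_const _)).sub
      (((hasDerivAt_pow 2 t).const_mul (L / 2)).mul_const (‖v - u‖ ^ 2))).congr_deriv ?_
    simp only [Nat.cast_ofNat, one_mul]
    ring
  have hanti : AntitoneOn ψ (Ici 0) := by
    refine antitoneOn_of_hasDerivWithinAt_nonpos (convex_Ici 0)
      (fun t _ => (hψ t).continuousAt.continuousWithinAt) (fun t _ => (hψ t).hasDerivWithinAt)
      fun t ht => ?_
    rw [interior_Ici] at ht
    have hinner : ⟪G (lineMap u v t) - G u, v - u⟫ ≤ L * t * ‖v - u‖ ^ 2 :=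
      calc ⟪G (lineMap u v t) - G u, v - u⟫
          ≤ ‖G (lineMap u v t) - G u‖ * ‖v - u‖ := real_inner_le_norm _ _
        _ ≤ L * ‖lineMap u v t - u‖ * ‖v - u‖ := by gcongr; exact hG _
        _ = L * t * ‖v - u‖ ^ 2 := by
          rw [lineMap_apply_module', add_sub_cancel_right, norm_smul, Real.norm_of_nonneg ht.le]
          ring
    rw [inner_sub_left] at hinner
    linarith
  have h01 := hanti self_mem_Ici (mem_Ici.2 zero_le_one) zero_le_one
  simp only [ψ, Function.comp_apply, lineMap_apply_zero, lineMap_apply_one] at h01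
  linarith

theorem ConvexOn.sub_le_inner_add_sq_of_lipschitz_gradient {G : E → E} {L : ℝ}
    (hc : ConvexOn ℝ univ g) (hg : ∀ p, HasGradientAt g (G p) p) {x : E}
    (hG : ∀ p, ‖G p - G x‖ ≤ L * ‖p - x‖) (y z : E) :
    g y - g z ≤ ⟪y - z, G x⟫ + L / 2 * ‖y - x‖ ^ 2 := by
  have hlower := hc.inner_le_sub_of_hasGradientAt (hg x) z
  have hupper := le_add_inner_add_sq_of_lipschitz_gradient hg hG y
  have hsplit : ⟪G x, y - x⟫ - ⟪G x, z - x⟫ = ⟪y - z, G x⟫ := by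
    rw [← inner_sub_right, sub_sub_sub_cancel_right, real_inner_comm]
  linarith

end

theorem stmt6_general {d N : ℕ}
    (f : Fin N → EuclideanSpace ℝ (Fin d) → ℝ)
    (gradf : Fin N → EuclideanSpace ℝ (Fin d) → EuclideanSpace ℝ (Fin d))
    (hgrad : ∀ i x, HasGradientAt (f i) (gradf i x) x)
    (L : ℝ)
    (hsmooth : ∀ i x y, ‖gradf i x - gradf i y‖ ≤ L * ‖x - y‖)
    (hconv : ∀ i, ConvexOn ℝ Set.univ (f i))
    (xstar : EuclideanSpace ℝ (Fin d)) (η : ℝ) (hη : 0 ≤ η)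
    (x : Fin N → EuclideanSpace ℝ (Fin d)) :
    -(2 * η / N) * ∑ i, ⟪(N : ℝ)⁻¹ • (∑ j, x j) - xstar, gradf i (x i)⟫
      ≤ -(2 * η) * ((N : ℝ)⁻¹ * ∑ i, f i ((N : ℝ)⁻¹ • ∑ j, x j)
            - (N : ℝ)⁻¹ * ∑ i, f i xstar)
        + (L * η / N) * ∑ i, ‖(N : ℝ)⁻¹ • (∑ j, x j) - x i‖ ^ 2 := by
  set xbar := (N : ℝ)⁻¹ • ∑ j, x j
  have hsum : ∑ i, (f i xbar - f i xstar)
      ≤ ∑ i, (⟪xbar - xstar, gradf i (x i)⟫ + L / 2 * ‖xbar - x i‖ ^ 2) :=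
    Finset.sum_le_sum fun i _ => (hconv i).sub_le_inner_add_sq_of_lipschitz_gradient (hgrad i)
      (fun p => hsmooth i p (x i)) xbar xstar
  rw [Finset.sum_sub_distrib, Finset.sum_add_distrib, ← Finset.mul_sum] at hsum
  have hscaled := mul_le_mul_of_nonneg_left hsum (by positivity : (0 : ℝ) ≤ 2 * η / N)
  linear_combination hscaled

/-- for convex `L`-smooth `f_i`, any point `x*`, any `η ≥ 0`, and any
points `x_1,…,x_N` with average `x̄`,
`−(2η/N) Σ ⟨x̄ − x*, ∇f_i(x_i)⟩ ≤ −2η (f(x̄) − f(x*)) + (Lη/N) Σ ‖x̄ − x_i‖²`. -/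
theorem stmt6 {d N : ℕ} (hN : 1 ≤ N)
    (f : Fin N → EuclideanSpace ℝ (Fin d) → ℝ)
    (gradf : Fin N → EuclideanSpace ℝ (Fin d) → EuclideanSpace ℝ (Fin d))
    (hgrad : ∀ i x, HasGradientAt (f i) (gradf i x) x)
    (L : ℝ) (hL : 0 < L)
    (hsmooth : ∀ i x y, ‖gradf i x - gradf i y‖ ≤ L * ‖x - y‖)
    (hconv : ∀ i, ConvexOn ℝ Set.univ (f i))
    (xstar : EuclideanSpace ℝ (Fin d)) (η : ℝ) (hη : 0 ≤ η)
    (x : Fin N → EuclideanSpace ℝ (Fin d)) :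
    -(2 * η / N) * ∑ i, ⟪(N : ℝ)⁻¹ • (∑ j, x j) - xstar, gradf i (x i)⟫
      ≤ -(2 * η) * ((N : ℝ)⁻¹ * ∑ i, f i ((N : ℝ)⁻¹ • ∑ j, x j)
            - (N : ℝ)⁻¹ * ∑ i, f i xstar)
        + (L * η / N) * ∑ i, ‖(N : ℝ)⁻¹ • (∑ j, x j) - x i‖ ^ 2 :=
  stmt6_general f gradf hgrad L hsmooth hconv xstar η hη x
end

section
/- Let p ∈ (0,1], τ̂ ≥ 0, and let B ≥ 1 and t ≥ B be integers. Suppose W^(k) ∈ ℝ^{N×N} for k = t−B,…,t−1 are doubly stochastic matrices each satisfying the p-mixing contraction, and G^(k) ∈ ℝ^{d×N} for k = t−B+1,…,t−1 satisfy ‖G^(k) − Ḡ^(k)‖_F² ≤ τ̂. Then Σ_{k=t−B+1}^{t−1} ‖ G^(k) · (∏_{j=k}^{t−1} W^(j)) · (I − 11ᵀ/N) ‖_F² ≤ τ̂·(1−p)/p, where each product ∏ is taken with the factors multiplied left to right in increasing order of j and I is the N×N identity matrix. -/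
/-- The `N × N` matrix `𝟙𝟙ᵀ/N`, all of whose entries equal `1/N`. -/
noncomputable def avgMat (N : ℕ) : Matrix (Fin N) (Fin N) ℝ :=
  Matrix.of fun _ _ => 1 / (N : ℝ)

/-- The squared Frobenius norm `‖A‖_F² = Σ_{i,j} A_{ij}²`. -/
def frobSq {m n : ℕ} (M : Matrix (Fin m) (Fin n) ℝ) : ℝ :=
  ∑ i, ∑ j, (M i j) ^ 2

/-- `W` is doubly stochastic: nonnegative entries, all row sums and column sums equal `1`. -/
def DoublyStochastic {N : ℕ} (W : Matrix (Fin N) (Fin N) ℝ) : Prop :=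
  (∀ i j, 0 ≤ W i j) ∧ (∀ i, ∑ j, W i j = 1) ∧ (∀ j, ∑ i, W i j = 1)

/-- `W` satisfies the `p`-mixing contraction:
`‖MW − M̄‖_F² ≤ (1−p) ‖M − M̄‖_F²` for every `d ≥ 1` and every `M ∈ ℝ^{d×N}`,
where `M̄ = M (𝟙𝟙ᵀ/N)`. (The case `d = 0` is trivial.) -/
def MixingContraction {N : ℕ} (p : ℝ) (W : Matrix (Fin N) (Fin N) ℝ) : Prop :=
  ∀ (d : ℕ) (M : Matrix (Fin d) (Fin N) ℝ),
    frobSq (M * W - M * avgMat N) ≤ (1 - p) * frobSq (M - M * avgMat N)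

/-- `∏_{j=a}^{a+m-1} W^{(j)}`, factors multiplied left to right in increasing index order. -/
noncomputable def prodFrom {N : ℕ} (W : ℕ → Matrix (Fin N) (Fin N) ℝ) (a m : ℕ) :
    Matrix (Fin N) (Fin N) ℝ :=
  ((List.range m).map fun j => W (a + j)).prod

/-!
Since `W` has unit row sums, `W (𝟙𝟙ᵀ/N) = 𝟙𝟙ᵀ/N`, so applying the contraction once per factor gives
`‖G (∏_{j=k}^{t-1} W^{(j)}) (I − 𝟙𝟙ᵀ/N)‖_F² ≤ (1−p)^{t−k} ‖G − Ḡ‖_F² ≤ (1−p)^{t−k} τ̂`.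
Summing over `k`, the exponents `t − k` range over `1, 2, …`, and the geometric series
`Σ_{m ≥ 1} (1−p)^m = (1−p)/p` bounds the total.
-/

open Finset

lemma mul_avgMat_of_sum_row_eq_one {N : ℕ} {W : Matrix (Fin N) (Fin N) ℝ}
    (hrow : ∀ i, ∑ j, W i j = 1) : W * avgMat N = avgMat N := by
  ext i j
  simp only [Matrix.mul_apply, avgMat, Matrix.of_apply]
  rw [← sum_mul, hrow i, one_mul]

lemma prodFrom_succ {N : ℕ} (W : ℕ → Matrix (Fin N) (Fin N) ℝ) (a m : ℕ) :
    prodFrom W a (m + 1) = prodFrom W a m * W (a + m) := by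
  simp [prodFrom, List.range_succ]

lemma frobSq_mul_prodFrom_sub_le {d N : ℕ} {p : ℝ} (hp1 : p ≤ 1)
    (W : ℕ → Matrix (Fin N) (Fin N) ℝ) (M : Matrix (Fin d) (Fin N) ℝ) (a m : ℕ)
    (hrow : ∀ i < m, ∀ r, ∑ c, W (a + i) r c = 1)
    (hmix : ∀ i < m, MixingContraction p (W (a + i))) :
    frobSq (M * prodFrom W a m - M * prodFrom W a m * avgMat N)
      ≤ (1 - p) ^ m * frobSq (M - M * avgMat N) := by
  induction m with
  | zero => simp [prodFrom]
  | succ m ih =>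
    set P := M * prodFrom W a m
    have hP : M * prodFrom W a (m + 1) = P * W (a + m) := by
      rw [prodFrom_succ, Matrix.mul_assoc]
    have havg : P * W (a + m) * avgMat N = P * avgMat N := by
      rw [Matrix.mul_assoc, mul_avgMat_of_sum_row_eq_one (hrow m m.lt_succ_self)]
    rw [hP, havg]
    calc frobSq (P * W (a + m) - P * avgMat N)
        ≤ (1 - p) * frobSq (P - P * avgMat N) := hmix m m.lt_succ_self d P
      _ ≤ (1 - p) * ((1 - p) ^ m * frobSq (M - M * avgMat N)) := by
          gcongr
          exact ih (fun i hi => hrow i (hi.trans m.lt_succ_self))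
              (fun i hi => hmix i (hi.trans m.lt_succ_self))
      _ = (1 - p) ^ (m + 1) * frobSq (M - M * avgMat N) := by ring

lemma sum_Ico_pow_sub_le {q : ℝ} (hq0 : 0 ≤ q) (hq1 : q < 1) (a t : ℕ) :
    ∑ k ∈ Ico a t, q ^ (t - k) ≤ q / (1 - q) := by
  rw [sum_Ico_reflect (q ^ ·) a (Nat.le_succ t), Nat.add_sub_cancel_left]
  simpa using geom_sum_Ico_le_of_lt_one hq0 hq1 (m := 1) (n := t + 1 - a)

theorem stmt8_general {d N : ℕ} (p : ℝ) (hp0 : 0 < p) (hp1 : p ≤ 1)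
    (τhat : ℝ) (hτ : 0 ≤ τhat) (B t : ℕ)
    (W : ℕ → Matrix (Fin N) (Fin N) ℝ) (G : ℕ → Matrix (Fin d) (Fin N) ℝ)
    (hDS : ∀ k ∈ Finset.Ico (t - B) t, DoublyStochastic (W k))
    (hmix : ∀ k ∈ Finset.Ico (t - B) t, MixingContraction p (W k))
    (hG : ∀ k ∈ Finset.Ico (t - B + 1) t, frobSq (G k - G k * avgMat N) ≤ τhat) :
    ∑ k ∈ Finset.Ico (t - B + 1) t,
        frobSq (G k * prodFrom W k (t - k) * (1 - avgMat N))
      ≤ τhat * (1 - p) / p := by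
  have hterm : ∀ k ∈ Ico (t - B + 1) t,
      frobSq (G k * prodFrom W k (t - k) * (1 - avgMat N)) ≤ (1 - p) ^ (t - k) * τhat := by
    intro k hk
    have hwindow : ∀ i < t - k, k + i ∈ Ico (t - B) t := by
      intro i hi
      simp only [mem_Ico] at hk ⊢
      omega
    rw [Matrix.mul_sub, Matrix.mul_one]
    calc _ ≤ (1 - p) ^ (t - k) * frobSq (G k - G k * avgMat N) :=
          frobSq_mul_prodFrom_sub_le hp1 W (G k) k (t - k)
            (fun i hi => (hDS _ (hwindow i hi)).2.1) (fun i hi => hmix _ (hwindow i hi))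
      _ ≤ (1 - p) ^ (t - k) * τhat :=
          mul_le_mul_of_nonneg_left (hG k hk) (pow_nonneg (by linarith) _)
  calc _ ≤ ∑ k ∈ Ico (t - B + 1) t, (1 - p) ^ (t - k) * τhat := sum_le_sum hterm
    _ = (∑ k ∈ Ico (t - B + 1) t, (1 - p) ^ (t - k)) * τhat := (sum_mul _ _ _).symm
    _ ≤ (1 - p) / (1 - (1 - p)) * τhat := by
          gcongr
          exact sum_Ico_pow_sub_le (by linarith) (by linarith) _ _
    _ = τhat * (1 - p) / p := by rw [sub_sub_cancel]; ring

/-- with doubly stochastic `p`-mixing matrices `W^{(k)}` for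
`k = t−B,…,t−1` and gradient matrices with `‖G^{(k)} − Ḡ^{(k)}‖_F² ≤ τ̂` for
`k = t−B+1,…,t−1`,
`Σ_{k=t−B+1}^{t−1} ‖G^{(k)} (∏_{j=k}^{t−1} W^{(j)}) (I − 𝟙𝟙ᵀ/N)‖_F² ≤ τ̂ (1−p)/p`. -/
theorem stmt8 {d N : ℕ} (p : ℝ) (hp0 : 0 < p) (hp1 : p ≤ 1)
    (τhat : ℝ) (hτ : 0 ≤ τhat) (B t : ℕ) (hB : 1 ≤ B) (ht : B ≤ t)
    (W : ℕ → Matrix (Fin N) (Fin N) ℝ) (G : ℕ → Matrix (Fin d) (Fin N) ℝ)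
    (hDS : ∀ k ∈ Finset.Ico (t - B) t, DoublyStochastic (W k))
    (hmix : ∀ k ∈ Finset.Ico (t - B) t, MixingContraction p (W k))
    (hG : ∀ k ∈ Finset.Ico (t - B + 1) t, frobSq (G k - G k * avgMat N) ≤ τhat) :
    ∑ k ∈ Finset.Ico (t - B + 1) t,
        frobSq (G k * prodFrom W k (t - k) * (1 - avgMat N))
      ≤ τhat * (1 - p) / p :=
  stmt8_general p hp0 hp1 τhat hτ B t W G hDS hmix hG
end

section
/- Let W be an N×N doubly stochastic real matrix and let λ₂(WᵀW) denote the second largest eigenvalue (counted with multiplicity) of the symmetric positive semidefinite matrix WᵀW. Then for every d ≥ 1 and every matrix M ∈ ℝ^{d×N}, ‖MW − M̄‖_F² ≤ λ₂(WᵀW)·‖M − M̄‖_F². In other words, W satisfies the p-mixing contraction with p = 1 − λ₂(WᵀW). -/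
/-- `a` is the second largest value (counted with multiplicity) of the tuple `v`:
there is an index `i` achieving the maximum of `v` such that `a` is the greatest value of
`v` over the remaining indices. -/
def IsSecondLargest {N : ℕ} (v : Fin N → ℝ) (a : ℝ) : Prop :=
  ∃ i : Fin N, (∀ k, v k ≤ v i) ∧ IsGreatest {x : ℝ | ∃ j, j ≠ i ∧ v j = x} a

open Matrix

lemma Matrix.dotProduct_self_nonneg {n R : Type*} [Fintype n] [Ring R] [LinearOrder R]
    [IsStrictOrderedRing R] (x : n → R) : 0 ≤ x ⬝ᵥ x :=
  Fintype.sum_nonneg fun i => mul_self_nonneg (x i)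

lemma Matrix.dotProduct_sq_le {n : Type*} [Fintype n] (x y : n → ℝ) :
    (x ⬝ᵥ y) ^ 2 ≤ (x ⬝ᵥ x) * (y ⬝ᵥ y) := by
  simpa only [dotProduct, sq] using Finset.sum_mul_sq_le_sq_mul_sq Finset.univ x y

lemma Matrix.dotProduct_transpose_mul_self_mulVec {m n : Type*} [Fintype m] [Fintype n]
    (W : Matrix m n ℝ) (y : n → ℝ) :
    y ⬝ᵥ ((Wᵀ * W) *ᵥ y) = (W *ᵥ y) ⬝ᵥ (W *ᵥ y) := by
  rw [← mulVec_mulVec, dotProduct_mulVec, vecMul_transpose]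

namespace Matrix.IsHermitian

variable {n : Type*} [Fintype n] [DecidableEq n] {A : Matrix n n ℝ} (hA : A.IsHermitian)
include hA

lemma sum_eigenvectorBasis_dotProduct_mul (x y : n → ℝ) :
    ∑ j, (hA.eigenvectorBasis j ⬝ᵥ x) * (hA.eigenvectorBasis j ⬝ᵥ y) = x ⬝ᵥ y := by
  simpa [EuclideanSpace.inner_eq_star_dotProduct, dotProduct_comm] using
    hA.eigenvectorBasis.sum_inner_mul_inner (WithLp.toLp 2 x) (WithLp.toLp 2 y)

lemma eigenvectorBasis_dotProduct_self (j : n) :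
    hA.eigenvectorBasis j ⬝ᵥ hA.eigenvectorBasis j = 1 := by
  have h := hA.eigenvectorBasis.inner_eq_one j
  rwa [EuclideanSpace.inner_eq_star_dotProduct, star_trivial] at h

lemma eigenvectorBasis_dotProduct_mulVec (j : n) (y : n → ℝ) :
    hA.eigenvectorBasis j ⬝ᵥ (A *ᵥ y) = hA.eigenvalues j * (hA.eigenvectorBasis j ⬝ᵥ y) := by
  rw [dotProduct_mulVec, ← mulVec_transpose, ← conjTranspose_eq_transpose_of_trivial, hA.eq,
    hA.mulVec_eigenvectorBasis, smul_dotProduct, smul_eq_mul]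

lemma eigenvalues_eq_dotProduct_mulVec (j : n) :
    hA.eigenvalues j = hA.eigenvectorBasis j ⬝ᵥ (A *ᵥ hA.eigenvectorBasis j) := by
  rw [hA.eigenvectorBasis_dotProduct_mulVec, hA.eigenvectorBasis_dotProduct_self, mul_one]

lemma dotProduct_mulVec_eq_sum (y : n → ℝ) :
    y ⬝ᵥ (A *ᵥ y) = ∑ j, hA.eigenvalues j * (hA.eigenvectorBasis j ⬝ᵥ y) ^ 2 := by
  rw [← hA.sum_eigenvectorBasis_dotProduct_mul]
  refine Finset.sum_congr rfl fun j _ => ?_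
  rw [hA.eigenvectorBasis_dotProduct_mulVec]; ring

lemma dotProduct_self_eq_sum (y : n → ℝ) :
    y ⬝ᵥ y = ∑ j, (hA.eigenvectorBasis j ⬝ᵥ y) ^ 2 := by
  simp only [← hA.sum_eigenvectorBasis_dotProduct_mul y y, sq]

lemma eigenvectorBasis_dotProduct_eq_zero {v : n → ℝ} {c : ℝ} (hv : A *ᵥ v = c • v) {j : n}
    (hj : hA.eigenvalues j ≠ c) : hA.eigenvectorBasis j ⬝ᵥ v = 0 := by
  have h := hA.eigenvectorBasis_dotProduct_mulVec j v
  rw [hv, dotProduct_smul, smul_eq_mul] at h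
  exact (mul_eq_mul_right_iff.mp h).resolve_left (Ne.symm hj)

end Matrix.IsHermitian

theorem Matrix.IsHermitian.dotProduct_mulVec_le_of_isSecondLargest {N : ℕ}
    {A : Matrix (Fin N) (Fin N) ℝ} (hA : A.IsHermitian) {lam2 : ℝ}
    (hlam2 : IsSecondLargest hA.eigenvalues lam2) {v : Fin N → ℝ} {c : ℝ}
    (hv : A *ᵥ v = c • v) (hv0 : v ≠ 0) (hc : ∀ j, hA.eigenvalues j ≤ c)
    {y : Fin N → ℝ} (hy : y ⬝ᵥ v = 0) :
    y ⬝ᵥ (A *ᵥ y) ≤ lam2 * (y ⬝ᵥ y) := by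
  set b := hA.eigenvectorBasis
  obtain ⟨i₀, -, -, hub⟩ := hlam2
  have hle : ∀ j ≠ i₀, hA.eigenvalues j ≤ lam2 := fun j hj => hub ⟨j, hj, rfl⟩
  suffices hi₀ : hA.eigenvalues i₀ ≤ lam2 ∨ b i₀ ⬝ᵥ y = 0 by
    rw [hA.dotProduct_mulVec_eq_sum, hA.dotProduct_self_eq_sum, Finset.mul_sum]
    refine Finset.sum_le_sum fun j _ => ?_
    obtain rfl | hj := eq_or_ne j i₀
    · rcases hi₀ with h | h
      · exact mul_le_mul_of_nonneg_right h (sq_nonneg _)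
      · simp [show hA.eigenvectorBasis j ⬝ᵥ y = 0 from h]
    · exact mul_le_mul_of_nonneg_right (hle j hj) (sq_nonneg _)
  refine or_iff_not_imp_left.mpr fun hgap => ?_
  -- the top eigenvalue is simple, so `v` is a multiple of `b i₀`
  have hv_ortho : ∀ j ≠ i₀, b j ⬝ᵥ v = 0 := fun j hj =>
    hA.eigenvectorBasis_dotProduct_eq_zero hv fun h => by linarith [hle j hj, hc i₀]
  have hproj : ∀ x, x ⬝ᵥ v = (b i₀ ⬝ᵥ x) * (b i₀ ⬝ᵥ v) := fun x => by
    rw [← hA.sum_eigenvectorBasis_dotProduct_mul, Finset.sum_eq_single i₀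
      (fun j _ hj => by rw [hv_ortho j hj, mul_zero]) (by simp)]
  have hv_coord : b i₀ ⬝ᵥ v ≠ 0 := fun h =>
    hv0 (dotProduct_self_eq_zero.mp (by rw [hproj, h, mul_zero]))
  exact (mul_eq_zero.mp ((hproj y).symm.trans hy)).resolve_right hv_coord

lemma Matrix.IsHermitian.eigenvalues_transpose_mul_self {m n : Type*} [Fintype m] [Fintype n]
    [DecidableEq n] {W : Matrix m n ℝ} (hA : (Wᵀ * W).IsHermitian) (j : n) :
    hA.eigenvalues j = (W *ᵥ hA.eigenvectorBasis j) ⬝ᵥ (W *ᵥ hA.eigenvectorBasis j) := by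
  rw [hA.eigenvalues_eq_dotProduct_mulVec, dotProduct_transpose_mul_self_mulVec]

lemma avgMat_mulVec_one {N : ℕ} (hN : N ≠ 0) : avgMat N *ᵥ 1 = 1 := by
  ext i
  simp [avgMat, mulVec, dotProduct, hN]

lemma avgMat_mul_of_sum_col_eq_one {N : ℕ} {W : Matrix (Fin N) (Fin N) ℝ}
    (hcol : ∀ j, ∑ i, W i j = 1) : avgMat N * W = avgMat N := by
  ext i j
  simp [avgMat, mul_apply, ← Finset.mul_sum, hcol]

lemma frobSq_eq_sum_dotProduct {m n : ℕ} (M : Matrix (Fin m) (Fin n) ℝ) :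
    frobSq M = ∑ i, M i ⬝ᵥ M i := by
  simp only [frobSq, dotProduct, sq]

namespace DoublyStochastic

variable {N : ℕ} {W : Matrix (Fin N) (Fin N) ℝ} (hW : DoublyStochastic W)
include hW

lemma mulVec_one : W *ᵥ 1 = 1 := by
  ext i
  simpa [mulVec, dotProduct] using hW.2.1 i

lemma one_vecMul : 1 ᵥ* W = 1 := by
  ext j
  simpa [vecMul, dotProduct] using hW.2.2 j

lemma transpose_mul_self_mulVec_one : (Wᵀ * W) *ᵥ 1 = 1 := by
  rw [← mulVec_mulVec, hW.mulVec_one, mulVec_transpose, hW.one_vecMul]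

-- Jensen: each `(W x)ᵢ` is a convex combination of the `xⱼ`, and the columns of `W` sum to `1`.
lemma mulVec_dotProduct_self_le (x : Fin N → ℝ) : (W *ᵥ x) ⬝ᵥ (W *ᵥ x) ≤ x ⬝ᵥ x := by
  obtain ⟨hpos, hrow, hcol⟩ := hW
  have hjensen : ∀ i, (W *ᵥ x) i ^ 2 ≤ ∑ j, W i j * x j ^ 2 := fun i => by
    simpa [mulVec, dotProduct, hrow i] using Finset.sum_sq_le_sum_mul_sum_of_sq_le_mul
      Finset.univ (r := fun j => W i j * x j) (fun j _ => hpos i j)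
      (fun j _ => mul_nonneg (hpos i j) (sq_nonneg (x j))) (fun j _ => (by ring : _ = _).le)
  calc (W *ᵥ x) ⬝ᵥ (W *ᵥ x) = ∑ i, (W *ᵥ x) i ^ 2 := by simp only [dotProduct, sq]
    _ ≤ ∑ i, ∑ j, W i j * x j ^ 2 := Finset.sum_le_sum fun i _ => hjensen i
    _ = ∑ j, (∑ i, W i j) * x j ^ 2 := by rw [Finset.sum_comm]; simp only [Finset.sum_mul]
    _ = x ⬝ᵥ x := by simp only [hcol, one_mul, dotProduct, sq]

lemma eigenvalues_transpose_mul_self_le_one (hA : (Wᵀ * W).IsHermitian) (j : Fin N) :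
    hA.eigenvalues j ≤ 1 := by
  rw [hA.eigenvalues_transpose_mul_self, ← hA.eigenvectorBasis_dotProduct_self j]
  exact hW.mulVec_dotProduct_self_le _

theorem vecMul_dotProduct_self_le (hA : (Wᵀ * W).IsHermitian) {lam2 : ℝ}
    (hlam2 : IsSecondLargest hA.eigenvalues lam2) {x : Fin N → ℝ} (hx : x ⬝ᵥ 1 = 0) :
    (x ᵥ* W) ⬝ᵥ (x ᵥ* W) ≤ lam2 * (x ⬝ᵥ x) := by
  set y := x ᵥ* W
  have hlam2_nonneg : 0 ≤ lam2 := by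
    obtain ⟨-, -, ⟨j, -, rfl⟩, -⟩ := hlam2
    rw [hA.eigenvalues_transpose_mul_self]
    exact dotProduct_self_nonneg _
  have hy : y ⬝ᵥ 1 = 0 := by rw [← dotProduct_mulVec, hW.mulVec_one, hx]
  have hone : (1 : Fin N → ℝ) ≠ 0 := by
    obtain ⟨i, -⟩ := hlam2
    exact fun h => one_ne_zero (congrFun h i)
  have hWy : (W *ᵥ y) ⬝ᵥ (W *ᵥ y) ≤ lam2 * (y ⬝ᵥ y) := by
    rw [← dotProduct_transpose_mul_self_mulVec]
    exact hA.dotProduct_mulVec_le_of_isSecondLargest hlam2 (c := 1)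
      (by rw [one_smul, hW.transpose_mul_self_mulVec_one]) hone
      (hW.eigenvalues_transpose_mul_self_le_one hA) hy
  have hcs : (y ⬝ᵥ y) ^ 2 ≤ (x ⬝ᵥ x) * ((W *ᵥ y) ⬝ᵥ (W *ᵥ y)) := by
    rw [show y ⬝ᵥ y = x ⬝ᵥ (W *ᵥ y) from (dotProduct_mulVec x W y).symm]
    exact dotProduct_sq_le x (W *ᵥ y)
  rcases (dotProduct_self_nonneg y).eq_or_lt with hy0 | hy0
  · rw [← hy0]
    exact mul_nonneg hlam2_nonneg (dotProduct_self_nonneg x)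
  · refine le_of_mul_le_mul_right ?_ hy0
    calc (y ⬝ᵥ y) * (y ⬝ᵥ y) = (y ⬝ᵥ y) ^ 2 := (sq _).symm
      _ ≤ (x ⬝ᵥ x) * (lam2 * (y ⬝ᵥ y)) :=
        hcs.trans (mul_le_mul_of_nonneg_left hWy (dotProduct_self_nonneg x))
      _ = lam2 * (x ⬝ᵥ x) * (y ⬝ᵥ y) := by ring

end DoublyStochastic

/-- if `W` is doubly stochastic and `λ₂` is the second largest eigenvalue
(with multiplicity) of the symmetric PSD matrix `WᵀW`, then for every `d ≥ 1` and every
`M ∈ ℝ^{d×N}`, `‖MW − M̄‖_F² ≤ λ₂ ‖M − M̄‖_F²`; i.e. `W` satisfies the `p`-mixing contraction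
with `p = 1 − λ₂(WᵀW)`. -/
theorem stmt13 {N : ℕ} (W : Matrix (Fin N) (Fin N) ℝ)
    (hDS : DoublyStochastic W)
    (hA : (W.transpose * W).IsHermitian)
    (lam2 : ℝ) (hlam2 : IsSecondLargest hA.eigenvalues lam2) :
    ∀ (dd : ℕ) (M : Matrix (Fin dd) (Fin N) ℝ),
      frobSq (M * W - M * avgMat N) ≤ lam2 * frobSq (M - M * avgMat N) := by
  intro dd M
  have hN : N ≠ 0 := by
    obtain ⟨i, -⟩ := hlam2
    exact Fin.pos_iff_nonempty.mpr ⟨i⟩ |>.ne'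
  have hXW : M * W - M * avgMat N = (M - M * avgMat N) * W := by
    rw [Matrix.sub_mul, Matrix.mul_assoc, avgMat_mul_of_sum_col_eq_one hDS.2.2]
  have hX : (M - M * avgMat N) *ᵥ 1 = 0 := by
    rw [sub_mulVec, ← mulVec_mulVec, avgMat_mulVec_one hN, sub_self]
  rw [hXW, frobSq_eq_sum_dotProduct, frobSq_eq_sum_dotProduct, Finset.mul_sum]
  exact Finset.sum_le_sum fun i _ => hDS.vecMul_dotProduct_self_le hA hlam2 (congrFun hX i)
end
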